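/- arXiv:1509.02084 — 2 statements merged into one kernel-verified Lean document; each statement's English description precedes it below -/
import Mathlib

section
/- Let (m, R_l, R_r) be a tour and K(m) = ⋂_{θ∈ℝ} D⁺(θ) its core. Then the interior of K(m) equals ⋂_{θ∈ℝ} {x ∈ ℝ² : ⟨x − m(θ), u'(θ)⟩ > 0}, and the topological boundary of K(m) is contained in ⋃_{θ∈ℝ} D(θ). -/
open MeasureTheory Set Filter
open scoped RealInnerProductSpace Topology

/-- The unit vector of direction θ. -/
noncomputable def uvec (θ : ℝ) : EuclideanSpace ℝ (Fin 2) := !₂[Real.cos θ, Real.sin θ]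

/-- The unit vector orthogonal to `uvec θ` (rotation of `uvec θ` by +π/2). -/
noncomputable def uperp (θ : ℝ) : EuclideanSpace ℝ (Fin 2) := !₂[-Real.sin θ, Real.cos θ]

/-- A tour: a continuous 2π-periodic planar curve parametrized by its tangent direction,
with left derivative `Rl θ • uvec θ` and right derivative `Rr θ • uvec θ`, where `Rl`, `Rr`
are bounded, 2π-periodic, and ruled (one-sided limits as indicated). -/
structure IsTour (m : ℝ → EuclideanSpace ℝ (Fin 2)) (Rl Rr : ℝ → ℝ) : Prop where
  continuous_m : Continuous m
  periodic_m : Function.Periodic m (2 * Real.pi)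
  periodic_Rl : Function.Periodic Rl (2 * Real.pi)
  periodic_Rr : Function.Periodic Rr (2 * Real.pi)
  bounded_Rl : ∃ C : ℝ, ∀ θ : ℝ, |Rl θ| ≤ C
  bounded_Rr : ∃ C : ℝ, ∀ θ : ℝ, |Rr θ| ≤ C
  hasLeftDeriv : ∀ θ : ℝ, HasDerivWithinAt m (Rl θ • uvec θ) (Set.Iic θ) θ
  hasRightDeriv : ∀ θ : ℝ, HasDerivWithinAt m (Rr θ • uvec θ) (Set.Ici θ) θ
  leftLim_Rl : ∀ θ₀ : ℝ, Filter.Tendsto Rl (nhdsWithin θ₀ (Set.Iio θ₀)) (nhds (Rl θ₀))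
  leftLim_Rr : ∀ θ₀ : ℝ, Filter.Tendsto Rr (nhdsWithin θ₀ (Set.Iio θ₀)) (nhds (Rl θ₀))
  rightLim_Rl : ∀ θ₀ : ℝ, Filter.Tendsto Rl (nhdsWithin θ₀ (Set.Ioi θ₀)) (nhds (Rr θ₀))
  rightLim_Rr : ∀ θ₀ : ℝ, Filter.Tendsto Rr (nhdsWithin θ₀ (Set.Ioi θ₀)) (nhds (Rr θ₀))

/-- The tangent line `D(θ)` of the tour at parameter θ. -/
def lineD (m : ℝ → EuclideanSpace ℝ (Fin 2)) (θ : ℝ) : Set (EuclideanSpace ℝ (Fin 2)) :=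
  {x | ∃ s : ℝ, x = m θ + s • uvec θ}

/-- The left closed half-plane `D⁺(θ)` bounded by the tangent line `D(θ)`. -/
def halfplaneD (m : ℝ → EuclideanSpace ℝ (Fin 2)) (θ : ℝ) : Set (EuclideanSpace ℝ (Fin 2)) :=
  {x | 0 ≤ ⟪x - m θ, uperp θ⟫}

/-- The core `K(m)` of a tour: the intersection of all left half-planes. -/
def tourCore (m : ℝ → EuclideanSpace ℝ (Fin 2)) : Set (EuclideanSpace ℝ (Fin 2)) :=
  ⋂ θ : ℝ, halfplaneD m θ

lemma inner_uperp' (v : EuclideanSpace ℝ (Fin 2)) (θ : ℝ) :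
    ⟪v, uperp θ⟫ = v 0 * (-Real.sin θ) + v 1 * Real.cos θ := by
  simp [uperp, PiLp.inner_apply, Fin.sum_univ_two]
  ring

lemma inner_uperp_self (θ : ℝ) : ⟪uperp θ, uperp θ⟫ = 1 := by
  rw [inner_uperp']
  have := Real.sin_sq_add_cos_sq θ
  simp only [uperp, Matrix.cons_val_zero, Matrix.cons_val_one, Matrix.head_cons]
  nlinarith

lemma norm_uperp (θ : ℝ) : ‖uperp θ‖ = 1 := by
  have h := real_inner_self_eq_norm_sq (uperp θ)
  rw [inner_uperp_self] at h
  nlinarith [norm_nonneg (uperp θ)]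

lemma uperp_periodic : Function.Periodic uperp (2 * Real.pi) := by
  intro θ
  unfold uperp
  rw [Real.sin_add_two_pi, Real.cos_add_two_pi]

lemma decomp (v : EuclideanSpace ℝ (Fin 2)) (θ : ℝ) (h : ⟪v, uperp θ⟫ = 0) :
    v = ⟪v, uvec θ⟫ • uvec θ := by
  simp only [uperp, PiLp.inner_apply, Fin.sum_univ_two, Matrix.cons_val_zero,
    Matrix.cons_val_one, Matrix.head_cons, RCLike.inner_apply, conj_trivial] at h
  have hpyth := Real.sin_sq_add_cos_sq θ
  ext i
  fin_cases i <;>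
    simp only [uvec, PiLp.inner_apply, Fin.sum_univ_two, Matrix.cons_val_zero,
      Matrix.cons_val_one, Matrix.head_cons, RCLike.inner_apply, conj_trivial,
      PiLp.smul_apply, smul_eq_mul, Fin.mk_zero, Fin.mk_one, Fin.isValue]
  · linear_combination -v 0 * hpyth - Real.sin θ * h
  · linear_combination -v 1 * hpyth + Real.cos θ * h

/-- The interior of the core of a tour is the intersection of the corresponding open
half-planes, and the topological boundary of the core is contained in the union of the
tangent lines `D(θ)`. -/
theorem statement0 (m : ℝ → EuclideanSpace ℝ (Fin 2)) (Rl Rr : ℝ → ℝ)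
    (htour : IsTour m Rl Rr) :
    (interior (tourCore m) =
      ⋂ θ : ℝ, {x : EuclideanSpace ℝ (Fin 2) | 0 < ⟪x - m θ, uperp θ⟫}) ∧
    frontier (tourCore m) ⊆ ⋃ θ : ℝ, lineD m θ := by
  set S : Set (EuclideanSpace ℝ (Fin 2)) :=
    ⋂ θ : ℝ, {x : EuclideanSpace ℝ (Fin 2) | 0 < ⟪x - m θ, uperp θ⟫} with hS
  -- S is open
  have hSopen : IsOpen S := by
    rw [Metric.isOpen_iff]
    intro x hx
    set g : ℝ → ℝ := fun θ => ⟪x - m θ, uperp θ⟫ with hg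
    have hgpos : ∀ θ, 0 < g θ := fun θ => by
      have := mem_iInter.1 hx θ; exact this
    have hgcont : Continuous g := by
      have h0 : Continuous fun θ => (x - m θ) 0 :=
        (continuous_apply (0 : Fin 2)).comp ((PiLp.continuous_ofLp 2 _).comp (continuous_const.sub htour.continuous_m))
      have h1 : Continuous fun θ => (x - m θ) 1 :=
        (continuous_apply (1 : Fin 2)).comp ((PiLp.continuous_ofLp 2 _).comp (continuous_const.sub htour.continuous_m))
      have : g = fun θ => (x - m θ) 0 * (-Real.sin θ) + (x - m θ) 1 * Real.cos θ := by
        funext θ; exact inner_uperp' _ _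
      rw [this]
      exact (h0.mul Real.continuous_sin.neg).add (h1.mul Real.continuous_cos)
    have hgper : Function.Periodic g (2 * Real.pi) := by
      intro θ
      simp only [hg, htour.periodic_m θ, uperp_periodic θ]
    have hcomp : IsCompact (Set.range g) :=
      hgper.compact_of_continuous (by positivity) hgcont
    obtain ⟨ε, hεmem, hεlb⟩ := hcomp.exists_isLeast ⟨g 0, Set.mem_range_self 0⟩
    obtain ⟨θ₀, hθ₀⟩ := hεmem
    have hεpos : 0 < ε := hθ₀ ▸ hgpos θ₀
    refine ⟨ε, hεpos, fun y hy => ?_⟩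
    rw [mem_iInter]
    intro θ
    have hlb : ε ≤ g θ := hεlb (Set.mem_range_self θ)
    have hsplit : ⟪y - m θ, uperp θ⟫ = g θ + ⟪y - x, uperp θ⟫ := by
      rw [hg]
      rw [← inner_add_left]
      congr 1
      abel
    have hbound : |⟪y - x, uperp θ⟫| ≤ ‖y - x‖ := by
      have := abs_real_inner_le_norm (y - x) (uperp θ)
      rwa [norm_uperp, mul_one] at this
    have hdist : ‖y - x‖ < ε := by
      rwa [Metric.mem_ball, dist_eq_norm] at hy
    have : -‖y - x‖ ≤ ⟪y - x, uperp θ⟫ := neg_le_of_abs_le hbound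
    show 0 < ⟪y - m θ, uperp θ⟫
    rw [hsplit]
    linarith
  -- S ⊆ tourCore
  have hSsub : S ⊆ tourCore m := by
    intro x hx
    rw [tourCore, mem_iInter]
    intro θ
    show 0 ≤ ⟪x - m θ, uperp θ⟫
    exact le_of_lt (mem_iInter.1 hx θ)
  -- interior tourCore ⊆ S
  have hint_sub : interior (tourCore m) ⊆ S := by
    intro x hx
    rw [mem_iInter]
    intro θ
    have hxK : x ∈ tourCore m := interior_subset hx
    have hge : 0 ≤ ⟪x - m θ, uperp θ⟫ := mem_iInter.1 hxK θ
    rcases lt_or_eq_of_le hge with h | h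
    · exact h
    · exfalso
      obtain ⟨ε, hεpos, hball⟩ := Metric.isOpen_iff.1 isOpen_interior x hx
      set y : EuclideanSpace ℝ (Fin 2) := x - (ε / 2) • uperp θ with hy
      have hymem : y ∈ Metric.ball x ε := by
        rw [Metric.mem_ball, dist_eq_norm, hy]
        have : x - (ε / 2) • uperp θ - x = -((ε / 2) • uperp θ) := by abel
        rw [this, norm_neg, norm_smul, norm_uperp, mul_one, Real.norm_eq_abs,
          abs_of_pos (by linarith)]
        linarith
      have hyK : y ∈ tourCore m := interior_subset (hball hymem)
      have h2 : 0 ≤ ⟪y - m θ, uperp θ⟫ := mem_iInter.1 hyK θ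
      have hval : ⟪y - m θ, uperp θ⟫ = -(ε / 2) := by
        rw [hy]
        have hxy : x - (ε / 2) • uperp θ - m θ = (x - m θ) - (ε / 2) • uperp θ := by abel
        rw [hxy, inner_sub_left, ← h, inner_smul_left, inner_uperp_self]
        simp
      rw [hval] at h2
      linarith
  have hint : interior (tourCore m) = S :=
    le_antisymm hint_sub (interior_maximal hSsub hSopen)
  refine ⟨hint, ?_⟩
  -- tourCore is closed
  have hclosed : IsClosed (tourCore m) := by
    apply isClosed_iInter
    intro θ
    have : Continuous fun x : EuclideanSpace ℝ (Fin 2) => ⟪x - m θ, uperp θ⟫ :=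
      (continuous_id.sub continuous_const).inner continuous_const
    exact isClosed_le continuous_const this
  intro x hx
  rw [hclosed.frontier_eq] at hx
  obtain ⟨hxK, hxnotint⟩ := hx
  rw [hint, mem_iInter] at hxnotint
  push_neg at hxnotint
  obtain ⟨θ, hθ⟩ := hxnotint
  have hge : 0 ≤ ⟪x - m θ, uperp θ⟫ := mem_iInter.1 hxK θ
  have heq : ⟪x - m θ, uperp θ⟫ = 0 := le_antisymm (by simpa using hθ) hge
  have hdec := decomp (x - m θ) θ heq
  refine mem_iUnion.2 ⟨θ, ⟪x - m θ, uvec θ⟫, ?_⟩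
  rw [← hdec]
  abel
end

section
/- Let (m, R_l, R_r) be a tour, K(m) its core, and m* = m(ℝ) the image of m. Then the topological boundary of K(m) is contained in m*. Moreover, the boundary of K(m) equals m* if and only if R_l(θ) ≥ 0 and R_r(θ) ≥ 0 for every θ ∈ ℝ. -/
open MeasureTheory Set Filter
open scoped RealInnerProductSpace Topology

section Aux

lemma inner_fin2 (x y : EuclideanSpace ℝ (Fin 2)) : ⟪x, y⟫ = x 0 * y 0 + x 1 * y 1 := by
  simp [PiLp.inner_apply, Fin.sum_univ_two, RCLike.inner_apply, starRingEnd_apply, mul_comm]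

lemma inner_uvec_uperp (φ θ : ℝ) : ⟪uvec φ, uperp θ⟫ = Real.sin (φ - θ) := by
  simp [inner_fin2, uvec, uperp, Real.sin_sub]; ring

lemma inner_uperp_uperp (φ θ : ℝ) : ⟪uperp φ, uperp θ⟫ = Real.cos (φ - θ) := by
  simp [inner_fin2, uvec, uperp, Real.cos_sub]; ring

lemma uvec_eq (θ : ℝ) : uvec θ = Real.cos θ • (EuclideanSpace.single (0:Fin 2) (1:ℝ)) + Real.sin θ • (EuclideanSpace.single (1:Fin 2) (1:ℝ)) := by
  ext i
  fin_cases i <;> simp [uvec, EuclideanSpace.single_apply]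

lemma uperp_eq (θ : ℝ) : uperp θ = (-Real.sin θ) • (EuclideanSpace.single (0:Fin 2) (1:ℝ)) + Real.cos θ • (EuclideanSpace.single (1:Fin 2) (1:ℝ)) := by
  ext i
  fin_cases i <;> simp [uperp, EuclideanSpace.single_apply]

lemma hasDerivAt_uvec (θ : ℝ) : HasDerivAt uvec (uperp θ) θ := by
  have h : HasDerivAt (fun t => Real.cos t • (EuclideanSpace.single (0:Fin 2) (1:ℝ)) + Real.sin t • (EuclideanSpace.single (1:Fin 2) (1:ℝ)))
      ((-Real.sin θ) • (EuclideanSpace.single (0:Fin 2) (1:ℝ)) + Real.cos θ • (EuclideanSpace.single (1:Fin 2) (1:ℝ))) θ :=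
    ((Real.hasDerivAt_cos θ).smul_const _).add ((Real.hasDerivAt_sin θ).smul_const _)
  rw [← uperp_eq] at h
  exact h.congr_of_eventuallyEq (Filter.Eventually.of_forall fun t => (uvec_eq t))

lemma hasDerivAt_uperp (θ : ℝ) : HasDerivAt uperp (-uvec θ) θ := by
  have h : HasDerivAt (fun t => (-Real.sin t) • (EuclideanSpace.single (0:Fin 2) (1:ℝ)) + Real.cos t • (EuclideanSpace.single (1:Fin 2) (1:ℝ)))
      ((-Real.cos θ) • (EuclideanSpace.single (0:Fin 2) (1:ℝ)) + (-Real.sin θ) • (EuclideanSpace.single (1:Fin 2) (1:ℝ))) θ :=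
    (((Real.hasDerivAt_sin θ).neg).smul_const _).add ((Real.hasDerivAt_cos θ).smul_const _)
  have e : -uvec θ = (-Real.cos θ) • (EuclideanSpace.single (0:Fin 2) (1:ℝ)) + (-Real.sin θ) • (EuclideanSpace.single (1:Fin 2) (1:ℝ)) := by
    rw [uvec_eq]; module
  rw [← e] at h
  exact h.congr_of_eventuallyEq (Filter.Eventually.of_forall fun t => (uperp_eq t))

lemma continuous_uperp : Continuous uperp :=
  continuous_iff_continuousAt.2 fun θ => (hasDerivAt_uperp θ).continuousAt

lemma eq_of_inners (v : EuclideanSpace ℝ (Fin 2)) (θ : ℝ) (h1 : ⟪v, uvec θ⟫ = 0)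
    (h2 : ⟪v, uperp θ⟫ = 0) : v = 0 := by
  rw [inner_fin2] at h1 h2
  simp only [uvec, uperp, PiLp.toLp_apply, Matrix.cons_val_zero, Matrix.cons_val_one, Matrix.head_cons] at h1 h2
  have hsc := Real.sin_sq_add_cos_sq θ
  have h0 : v 0 = 0 := by linear_combination Real.cos θ * h1 - Real.sin θ * h2 - v 0 * hsc
  have hv1 : v 1 = 0 := by linear_combination Real.sin θ * h1 + Real.cos θ * h2 - v 1 * hsc
  ext i
  fin_cases i
  · simpa using h0
  · simpa using hv1

variable {m : ℝ → EuclideanSpace ℝ (Fin 2)} {Rl Rr : ℝ → ℝ}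

lemma hasDerivAt_h (ht : IsTour m Rl Rr) (x : EuclideanSpace ℝ (Fin 2)) (θ : ℝ) :
    HasDerivAt (fun φ => ⟪x - m φ, uperp φ⟫) (-⟪x - m θ, uvec θ⟫) θ := by
  have key : ∀ (R : ℝ) (s : Set ℝ), HasDerivWithinAt m (R • uvec θ) s θ →
      HasDerivWithinAt (fun φ => ⟪x - m φ, uperp φ⟫) (-⟪x - m θ, uvec θ⟫) s θ := by
    intro R s hm
    have h1 : HasDerivWithinAt (fun φ => x - m φ) (-(R • uvec θ)) s θ := hm.const_sub x
    have h2 := (hasDerivAt_uperp θ).hasDerivWithinAt (s := s)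
    have h3 := h1.inner ℝ h2
    refine h3.congr_deriv ?_
    rw [inner_neg_right, inner_neg_left, real_inner_smul_left, inner_uvec_uperp, sub_self,
      Real.sin_zero, mul_zero, neg_zero, add_zero]
  have := (key (Rl θ) _ (ht.hasLeftDeriv θ)).union (key (Rr θ) _ (ht.hasRightDeriv θ))
  rwa [Set.Iic_union_Ici, hasDerivWithinAt_univ] at this

lemma hasDerivWithinAt_F_right (ht : IsTour m Rl Rr) (θ : ℝ) (c : EuclideanSpace ℝ (Fin 2)) (φ : ℝ) :
    HasDerivWithinAt (fun ψ => ⟪m ψ - c, uperp θ⟫) (Rr φ * Real.sin (φ - θ)) (Ici φ) φ := by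
  have h3 := ((ht.hasRightDeriv φ).sub_const c).inner ℝ (hasDerivWithinAt_const φ _ (uperp θ))
  refine h3.congr_deriv ?_
  rw [inner_zero_right, real_inner_smul_left, inner_uvec_uperp, zero_add]

lemma hasDerivWithinAt_F_left (ht : IsTour m Rl Rr) (θ : ℝ) (c : EuclideanSpace ℝ (Fin 2)) (φ : ℝ) :
    HasDerivWithinAt (fun ψ => ⟪m ψ - c, uperp θ⟫) (Rl φ * Real.sin (φ - θ)) (Iic φ) φ := by
  have h3 := ((ht.hasLeftDeriv φ).sub_const c).inner ℝ (hasDerivWithinAt_const φ _ (uperp θ))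
  refine h3.congr_deriv ?_
  rw [inner_zero_right, real_inner_smul_left, inner_uvec_uperp, zero_add]

lemma continuous_h (ht : IsTour m Rl Rr) (x : EuclideanSpace ℝ (Fin 2)) :
    Continuous fun θ => ⟪x - m θ, uperp θ⟫ :=
  (continuous_const.sub ht.continuous_m).inner continuous_uperp

lemma periodic_h (ht : IsTour m Rl Rr) (x : EuclideanSpace ℝ (Fin 2)) :
    Function.Periodic (fun θ => ⟪x - m θ, uperp θ⟫) (2 * Real.pi) := fun θ => by
  simp only [ht.periodic_m θ, uperp_periodic θ]

lemma mono_right {f f' : ℝ → ℝ} {a b : ℝ} (hf : ContinuousOn f (Icc a b))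
    (hder : ∀ x ∈ Ico a b, HasDerivWithinAt f (f' x) (Ici x) x)
    (hpos : ∀ x ∈ Ico a b, 0 ≤ f' x) : ∀ x ∈ Icc a b, f a ≤ f x := by
  intro x hx
  have := image_le_of_deriv_right_le_deriv_boundary (f := fun t => -f t) (f' := fun t => -f' t)
    (B := fun _ => -f a) (B' := fun _ => 0) hf.neg (fun t htt => (hder t htt).neg)
    le_rfl continuousOn_const (fun t _ => hasDerivWithinAt_const _ _ _)
    (fun t htt => neg_nonpos.2 (hpos t htt)) hx
  linarith

lemma anti_right {f f' : ℝ → ℝ} {a b : ℝ} (hf : ContinuousOn f (Icc a b))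
    (hder : ∀ x ∈ Ico a b, HasDerivWithinAt f (f' x) (Ici x) x)
    (hneg : ∀ x ∈ Ico a b, f' x ≤ 0) : ∀ x ∈ Icc a b, f b ≤ f x := by
  intro x hx
  have hsub : Icc x b ⊆ Icc a b := Icc_subset_Icc hx.1 le_rfl
  have hsub2 : Ico x b ⊆ Ico a b := Ico_subset_Ico hx.1 le_rfl
  have := image_le_of_deriv_right_le_deriv_boundary (f := f) (f' := f')
    (B := fun _ => f x) (B' := fun _ => 0) (hf.mono hsub) (fun t htt => hder t (hsub2 htt))
    le_rfl continuousOn_const (fun t _ => hasDerivWithinAt_const _ _ _)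
    (fun t htt => hneg t (hsub2 htt)) (right_mem_Icc.2 hx.2)
  exact this

lemma core_isClosed (m : ℝ → EuclideanSpace ℝ (Fin 2)) : IsClosed (tourCore m) := by
  refine isClosed_iInter fun θ => ?_
  have hc : Continuous fun x : EuclideanSpace ℝ (Fin 2) => ⟪x - m θ, uperp θ⟫ :=
    (continuous_id.sub continuous_const).inner continuous_const
  exact isClosed_le continuous_const hc

lemma frontier_subset_range (ht : IsTour m Rl Rr) : frontier (tourCore m) ⊆ Set.range m := by
  intro x hx
  rw [(core_isClosed m).frontier_eq] at hx
  obtain ⟨hK, hni⟩ := hx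
  set g : ℝ → ℝ := fun θ => ⟪x - m θ, uperp θ⟫ with hg
  have hg0 : ∀ θ, 0 ≤ g θ := fun θ => mem_iInter.1 hK θ
  have hzero : ∃ θ, g θ = 0 := by
    by_contra hno
    push_neg at hno
    have hgpos : ∀ θ, 0 < g θ := fun θ => lt_of_le_of_ne (hg0 θ) (Ne.symm (hno θ))
    have hπ : (0:ℝ) < 2 * Real.pi := by positivity
    obtain ⟨θ₀, hθ₀, hmin⟩ := isCompact_Icc.exists_isMinOn (nonempty_Icc.2 hπ.le)
      (continuous_h ht x).continuousOn
    have hc : 0 < g θ₀ := hgpos θ₀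
    have hlb : ∀ θ, g θ₀ ≤ g θ := by
      intro θ
      obtain ⟨y, hy, hxy⟩ := (periodic_h ht x).exists_mem_Ico₀ hπ θ
      calc g θ₀ ≤ g y := hmin (Ico_subset_Icc_self hy)
        _ = g θ := hxy.symm
    apply hni
    rw [mem_interior]
    refine ⟨Metric.ball x (g θ₀), fun y hy => ?_, Metric.isOpen_ball, Metric.mem_ball_self hc⟩
    rw [tourCore, mem_iInter]
    intro θ
    show (0:ℝ) ≤ ⟪y - m θ, uperp θ⟫
    have hsplit : ⟪y - m θ, uperp θ⟫ = ⟪y - x, uperp θ⟫ + g θ := by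
      rw [hg, ← inner_add_left, sub_add_sub_cancel]
    have hbnd : |⟪y - x, uperp θ⟫| ≤ ‖y - x‖ := by
      have := abs_real_inner_le_norm (y - x) (uperp θ)
      rwa [norm_uperp, mul_one] at this
    have hdist : ‖y - x‖ < g θ₀ := by rwa [Metric.mem_ball, dist_eq_norm] at hy
    have := hlb θ
    have := abs_le.1 hbnd
    linarith [this.1]
  obtain ⟨θs, hz⟩ := hzero
  have hlocmin : IsLocalMin g θs := Filter.Eventually.of_forall fun θ => by
    rw [hz]; exact hg0 θ
  have hd0 : -⟪x - m θs, uvec θs⟫ = 0 := hlocmin.hasDerivAt_eq_zero (hasDerivAt_h ht x θs)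
  have hv : x - m θs = 0 := eq_of_inners _ θs (neg_eq_zero.1 hd0) hz
  exact ⟨θs, (sub_eq_zero.1 hv).symm⟩

lemma F_nonneg (ht : IsTour m Rl Rr) (hR : ∀ θ, 0 ≤ Rl θ ∧ 0 ≤ Rr θ) (θ φ : ℝ) :
    (0:ℝ) ≤ ⟪m φ - m θ, uperp θ⟫ := by
  set F : ℝ → ℝ := fun ψ => ⟪m ψ - m θ, uperp θ⟫ with hF
  have hFcont : Continuous F := (ht.continuous_m.sub continuous_const).inner continuous_const
  have hFper : Function.Periodic F (2 * Real.pi) := fun ψ => by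
    simp only [hF, ht.periodic_m ψ]
  have hπ : (0:ℝ) < Real.pi := Real.pi_pos
  obtain ⟨ψ, hψ, hEq⟩ := hFper.exists_mem_Ico (by positivity) φ θ
  show 0 ≤ F φ
  rw [hEq]
  have hFθ : F θ = 0 := by simp [hF]
  rcases le_or_gt ψ (θ + Real.pi) with hcase | hcase
  · have := mono_right (f := F) (f' := fun t => Rr t * Real.sin (t - θ))
      hFcont.continuousOn (fun t _ => hasDerivWithinAt_F_right ht θ (m θ) t)
      (fun t htt => mul_nonneg (hR t).2
        (Real.sin_nonneg_of_nonneg_of_le_pi (by linarith [htt.1]) (by linarith [htt.2])))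
      ψ ⟨hψ.1, hcase⟩
    linarith
  · have hend : F (θ + 2 * Real.pi) = 0 := by
      have := hFper θ; rw [add_comm] at this ⊢; rw [this]; exact hFθ
    have := anti_right (f := F) (f' := fun t => Rr t * Real.sin (t - θ))
      (a := θ + Real.pi) (b := θ + 2 * Real.pi)
      hFcont.continuousOn (fun t _ => hasDerivWithinAt_F_right ht θ (m θ) t)
      (fun t htt => by
        have h1 : Real.sin (t - θ - Real.pi) = -Real.sin (t - θ) := Real.sin_sub_pi _
        have h2 : 0 ≤ Real.sin (t - θ - Real.pi) :=
          Real.sin_nonneg_of_nonneg_of_le_pi (by linarith [htt.1]) (by linarith [htt.2])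
        show Rr t * Real.sin (t - θ) ≤ 0
        nlinarith [(hR t).2, h1, h2])
      ψ ⟨hcase.le, by linarith [hψ.2]⟩
    linarith
lemma range_subset_frontier (ht : IsTour m Rl Rr) (hR : ∀ θ, 0 ≤ Rl θ ∧ 0 ≤ Rr θ) :
    Set.range m ⊆ frontier (tourCore m) := by
  rintro _ ⟨θ, rfl⟩
  have hK : m θ ∈ tourCore m := mem_iInter.2 fun ψ => F_nonneg ht hR ψ θ
  rw [(core_isClosed m).frontier_eq]
  refine ⟨hK, fun hint => ?_⟩
  rw [mem_interior_iff_mem_nhds, Metric.mem_nhds_iff] at hint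
  obtain ⟨ε, hε, hball⟩ := hint
  set y := m θ - (ε/2) • uperp θ with hy
  have hymem : y ∈ Metric.ball (m θ) ε := by
    rw [Metric.mem_ball, dist_eq_norm, hy, sub_sub_cancel_left, norm_neg, norm_smul,
      norm_uperp, mul_one, Real.norm_eq_abs, abs_of_pos (by linarith)]
    linarith
  have h1 : (0:ℝ) ≤ ⟪y - m θ, uperp θ⟫ := mem_iInter.1 (hball hymem) θ
  have h2 : ⟪y - m θ, uperp θ⟫ = -(ε/2) := by
    rw [hy, sub_sub_cancel_left, inner_neg_left, real_inner_smul_left,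
      real_inner_self_eq_norm_sq, norm_uperp]
    ring
  rw [h2] at h1
  linarith

lemma cos_lt_one_aux {t : ℝ} (h0 : 0 < t) (hπ : t < Real.pi) : Real.cos t < 1 := by
  have hs : 0 < Real.sin (t/2) := Real.sin_pos_of_pos_of_lt_pi (by linarith)
    (by linarith [Real.pi_pos])
  have hc := Real.cos_sq (t/2)
  rw [show 2*(t/2) = t by ring] at hc
  nlinarith [Real.sin_sq_add_cos_sq (t/2), hs]

lemma hasDerivAt_B (C θ : ℝ) (ψ : ℝ) :
    HasDerivAt (fun ψ => C * (1 - Real.cos (ψ - θ))) (C * Real.sin (ψ - θ)) ψ := by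
  have h1 : HasDerivAt (fun ψ => Real.cos (ψ - θ)) (-Real.sin (ψ - θ)) ψ := by
    exact ((Real.hasDerivAt_cos (ψ - θ)).comp ψ ((hasDerivAt_id ψ).sub_const θ)).congr_deriv (mul_one _)
  have h2 : HasDerivAt (fun ψ => 1 - Real.cos (ψ - θ)) (Real.sin (ψ - θ)) ψ := by
    simpa using h1.const_sub 1
  simpa using h2.const_mul C

lemma nonneg_of_frontier (ht : IsTour m Rl Rr)
    (hfr : frontier (tourCore m) = Set.range m) : ∀ θ, 0 ≤ Rl θ ∧ 0 ≤ Rr θ := by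
  have hrK : ∀ φ θ, (0:ℝ) ≤ ⟪m φ - m θ, uperp θ⟫ := by
    intro φ θ
    have h1 : m φ ∈ frontier (tourCore m) := hfr ▸ mem_range_self φ
    have h2 : m φ ∈ tourCore m := by
      have := frontier_subset_closure (s := tourCore m) h1
      rwa [(core_isClosed m).closure_eq] at this
    exact mem_iInter.1 h2 θ
  have hπ : (0:ℝ) < Real.pi := Real.pi_pos
  intro θ
  constructor
  · -- Rl θ ≥ 0
    by_contra hneg
    push_neg at hneg
    have hev : ∀ᶠ φ in 𝓝[<] θ, Rl φ < Rl θ / 2 :=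
      (ht.leftLim_Rl θ).eventually_lt_const (by linarith)
    obtain ⟨a, ha, hsub⟩ := mem_nhdsLT_iff_exists_Ioo_subset.1 hev
    set δ := min (θ - a) Real.pi / 2 with hδ
    have hδpos : 0 < δ := by
      have : (0:ℝ) < θ - a := by simpa using sub_pos.2 (mem_Iio.1 ha)
      rw [hδ]; positivity
    have hδa : δ < θ - a := by
      have h1 := min_le_left (θ - a) Real.pi
      have : (0:ℝ) < θ - a := by simpa using sub_pos.2 (mem_Iio.1 ha)
      rw [hδ]; rcases min_cases (θ - a) Real.pi with ⟨h2, _⟩ | ⟨h2, _⟩ <;> rw [h2] <;> linarith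
    have hδπ : δ ≤ Real.pi / 2 := by
      rw [hδ]; have := min_le_right (θ - a) Real.pi; linarith
    set G : ℝ → ℝ := fun t => ⟪m (2*θ - t) - m θ, uperp θ⟫ with hG
    have hGder : ∀ t : ℝ, HasDerivWithinAt G (Rl (2*θ - t) * Real.sin (t - θ)) (Ici t) t := by
      intro t
      have hout := hasDerivWithinAt_F_left ht θ (m θ) (2*θ - t)
      have hin : HasDerivWithinAt (fun t : ℝ => 2*θ - t) (-1) (Ici t) t :=
        ((hasDerivAt_id t).const_sub (2*θ)).hasDerivWithinAt
      have hmaps : MapsTo (fun t : ℝ => 2*θ - t) (Ici t) (Iic (2*θ - t)) :=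
        fun u hu => by simp only [mem_Iic]; simp only [mem_Ici] at hu; linarith
      have := hout.comp t hin hmaps
      refine this.congr_deriv ?_
      have he : (2*θ - t) - θ = -(t - θ) := by ring
      rw [he, Real.sin_neg]; ring
    have hGcont : Continuous G :=
      ((ht.continuous_m.comp (by continuity)).sub continuous_const).inner continuous_const
    have hG0 : G θ = 0 := by
      rw [hG]; show (⟪m (2*θ - θ) - m θ, uperp θ⟫:ℝ) = 0
      rw [show 2*θ - θ = θ by ring, sub_self, inner_zero_left]
    have key := image_le_of_deriv_right_le_deriv_boundary (f := G)
      (f' := fun t => Rl (2*θ - t) * Real.sin (t - θ))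
      (B := fun t => (Rl θ / 2) * (1 - Real.cos (t - θ)))
      (B' := fun t => (Rl θ / 2) * Real.sin (t - θ))
      (a := θ) (b := θ + δ)
      hGcont.continuousOn (fun t _ => hGder t)
      (by simp [hG0])
      (by fun_prop)
      (fun t _ => (hasDerivAt_B _ θ t).hasDerivWithinAt)
      (fun t htt => by
        rcases eq_or_lt_of_le htt.1 with rfl | hlt
        · simp
        · have hsin : 0 ≤ Real.sin (t - θ) :=
            Real.sin_nonneg_of_nonneg_of_le_pi (by linarith) (by linarith [htt.2])
          have hmem : (2*θ - t) ∈ Ioo a θ := ⟨by linarith [htt.2], by linarith⟩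
          exact mul_le_mul_of_nonneg_right (hsub hmem).le hsin)
      (right_mem_Icc.2 (by linarith))
    have hcos : Real.cos (θ + δ - θ) < 1 := by
      rw [show θ + δ - θ = δ by ring]
      exact cos_lt_one_aux hδpos (by linarith)
    have hge : 0 ≤ G (θ + δ) := by
      rw [hG]; show (0:ℝ) ≤ ⟪m (2*θ - (θ + δ)) - m θ, uperp θ⟫
      exact hrK _ θ
    nlinarith [key]
  · -- Rr θ ≥ 0
    by_contra hneg
    push_neg at hneg
    have hev : ∀ᶠ φ in 𝓝[>] θ, Rr φ < Rr θ / 2 :=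
      (ht.rightLim_Rr θ).eventually_lt_const (by linarith)
    obtain ⟨b, hb, hsub⟩ := mem_nhdsGT_iff_exists_Ioo_subset.1 hev
    set δ := min (b - θ) Real.pi / 2 with hδ
    have hδpos : 0 < δ := by
      have : (0:ℝ) < b - θ := by simpa using sub_pos.2 (mem_Ioi.1 hb)
      rw [hδ]; positivity
    have hδb : δ < b - θ := by
      have : (0:ℝ) < b - θ := by simpa using sub_pos.2 (mem_Ioi.1 hb)
      rw [hδ]; rcases min_cases (b - θ) Real.pi with ⟨h2, _⟩ | ⟨h2, _⟩ <;> rw [h2] <;> linarith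
    have hδπ : δ ≤ Real.pi / 2 := by
      rw [hδ]; have := min_le_right (b - θ) Real.pi; linarith
    set F : ℝ → ℝ := fun ψ => ⟪m ψ - m θ, uperp θ⟫ with hF
    have hFcont : Continuous F := (ht.continuous_m.sub continuous_const).inner continuous_const
    have hF0 : F θ = 0 := by rw [hF]; show (⟪m θ - m θ, uperp θ⟫:ℝ) = 0; rw [sub_self, inner_zero_left]
    have key := image_le_of_deriv_right_le_deriv_boundary (f := F)
      (f' := fun t => Rr t * Real.sin (t - θ))
      (B := fun t => (Rr θ / 2) * (1 - Real.cos (t - θ)))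
      (B' := fun t => (Rr θ / 2) * Real.sin (t - θ))
      (a := θ) (b := θ + δ)
      hFcont.continuousOn (fun t _ => hasDerivWithinAt_F_right ht θ (m θ) t)
      (by simp [hF0])
      (by fun_prop)
      (fun t _ => (hasDerivAt_B _ θ t).hasDerivWithinAt)
      (fun t htt => by
        rcases eq_or_lt_of_le htt.1 with rfl | hlt
        · simp
        · have hsin : 0 ≤ Real.sin (t - θ) :=
            Real.sin_nonneg_of_nonneg_of_le_pi (by linarith) (by linarith [htt.2])
          have hmem : t ∈ Ioo θ b := ⟨hlt, by linarith [htt.2]⟩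
          exact mul_le_mul_of_nonneg_right (hsub hmem).le hsin)
      (right_mem_Icc.2 (by linarith))
    have hcos : Real.cos (θ + δ - θ) < 1 := by
      rw [show θ + δ - θ = δ by ring]
      exact cos_lt_one_aux hδpos (by linarith)
    have hge : 0 ≤ F (θ + δ) := hrK _ θ
    nlinarith [key]
end Aux

/-- The boundary of the core of a tour is contained in the image `m* = m(ℝ)` of the tour;
moreover the boundary equals the image if and only if `Rl` and `Rr` are nonnegative. -/
theorem statement3 (m : ℝ → EuclideanSpace ℝ (Fin 2)) (Rl Rr : ℝ → ℝ)
    (htour : IsTour m Rl Rr) :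
    frontier (tourCore m) ⊆ Set.range m ∧
    (frontier (tourCore m) = Set.range m ↔ ∀ θ : ℝ, 0 ≤ Rl θ ∧ 0 ≤ Rr θ) := by
  refine ⟨frontier_subset_range htour, nonneg_of_frontier htour, fun hR => ?_⟩
  exact Set.Subset.antisymm (frontier_subset_range htour) (range_subset_frontier htour hR)
end
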